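/- For every integer d ≥ 0, the operator E = [2]_q·(q²·γ₂²ωμ₁∇ + μ₂ν) acts injectively on P(𝕊)^d: if p ∈ P(𝕊)^d and E(p) = 0, then p = 0. -/
import Mathlib


noncomputable section

open MvPolynomial

/-- The quantum integer `[n]_q = (q^n - q^{-n})/(q - q^{-1})`. -/
def qint (q : ℂ) (n : ℤ) : ℂ := (q ^ n - q ^ (-n)) / (q - q⁻¹)

/-- Build a linear operator on `ℂ[x₁,…,x_N]` from its values on the monomial basis. -/
def mkOp {N : ℕ} (f : (Fin N →₀ ℕ) → MvPolynomial (Fin N) ℂ) :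
    Module.End ℂ (MvPolynomial (Fin N) ℂ) :=
  (MvPolynomial.basisMonomials (Fin N) ℂ).constr ℂ fun α => f α

/-- `μ_j`: multiplication by `x_j`. -/
def mu {N : ℕ} (j : Fin N) : Module.End ℂ (MvPolynomial (Fin N) ℂ) :=
  mkOp fun α => monomial (α + Finsupp.single j 1) 1

/-- `γ_j^e` (e ∈ ℤ): multiply the monomial `x^α` by `q^{e·α_j}`. -/
def gam {N : ℕ} (q : ℂ) (j : Fin N) (e : ℤ) : Module.End ℂ (MvPolynomial (Fin N) ℂ) :=
  mkOp fun α => q ^ (e * (α j : ℤ)) • monomial α 1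

/-- The `p`-shifted partial `q`-derivative in direction `j`:
`x^α ↦ [α_j]_p · x^{α - ε_j}` (zero when `α_j = 0`, since `[0]_p = 0`). -/
def del {N : ℕ} (p : ℂ) (j : Fin N) : Module.End ℂ (MvPolynomial (Fin N) ℂ) :=
  mkOp fun α => qint p (α j) • monomial (α - Finsupp.single j 1) 1

/-- `P(𝕊) = ℂ[x₁,x₂,y]`, with variables indexed `0 ↦ x₁`, `1 ↦ x₂`, `2 ↦ y`. -/
abbrev PS3 := MvPolynomial (Fin 3) ℂ

/-- `K_Δ = q·γ₁²γ₂^{-2}ω²`. -/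
def KDel (q : ℂ) : Module.End ℂ PS3 := q • (gam q 0 2 * gam q 1 (-2) * gam q 2 2)

/-- `K_Δ^{-1} = q^{-1}·γ₁^{-2}γ₂²ω^{-2}`. -/
def KDel' (q : ℂ) : Module.End ℂ PS3 := q⁻¹ • (gam q 0 (-2) * gam q 1 2 * gam q 2 (-2))

/-- `E_Δ = q·ω²μ₁∂_{2,q²} + ν²/[2]_q`. -/
def EDel (q : ℂ) : Module.End ℂ PS3 :=
  q • (gam q 2 2 * mu 0 * del (q ^ 2) 1) + (qint q 2)⁻¹ • (mu 2 * mu 2)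

/-- `F_Δ = μ₂∂_{1,q²} − (1/[2]_q)·γ₁^{-2}γ₂²∇²`. -/
def FDel (q : ℂ) : Module.End ℂ PS3 :=
  mu 1 * del (q ^ 2) 0 - (qint q 2)⁻¹ • (gam q 0 (-2) * gam q 1 2 * (del q 2 * del q 2))

/-- `K = q²·γ₁²γ₂²`. -/
def Kop (q : ℂ) : Module.End ℂ PS3 := (q ^ 2 : ℂ) • (gam q 0 2 * gam q 1 2)

/-- `K^{-1} = q^{-2}·γ₁^{-2}γ₂^{-2}`. -/
def Kop' (q : ℂ) : Module.End ℂ PS3 := (q ^ (-2 : ℤ)) • (gam q 0 (-2) * gam q 1 (-2))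

/-- `E = [2]_q·(q²·γ₂²ωμ₁∇ + μ₂ν)`. -/
def Eop (q : ℂ) : Module.End ℂ PS3 :=
  qint q 2 • ((q ^ 2 : ℂ) • (gam q 1 2 * gam q 2 1 * mu 0 * del q 2) + mu 1 * mu 2)

/-- `F = ∂_{1,q²}ν − γ₁^{-2}ω∂_{2,q²}∇`, the quantum symplectic Dirac operator. -/
def Fop (q : ℂ) : Module.End ℂ PS3 :=
  del (q ^ 2) 0 * mu 2 - gam q 0 (-2) * gam q 2 1 * (del (q ^ 2) 1 * del q 2)

/-- `P(𝕊)^d`: the span of the monomials `x₁^a x₂^b y^c` with `a + b = d`. -/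
def PSd (d : ℕ) : Submodule ℂ PS3 :=
  Submodule.span ℂ {p | ∃ α : Fin 3 →₀ ℕ, α 0 + α 1 = d ∧ p = monomial α (1 : ℂ)}

/-- `M^d = ker F ⊓ P(𝕊)^d`: the degree-`d` symplectic monogenics. -/
def Mono (q : ℂ) (d : ℕ) : Submodule ℂ PS3 := LinearMap.ker (Fop q) ⊓ PSd d


/-! ### Auxiliary lemmas -/

lemma mkOp_monomial {N : ℕ} (f : (Fin N →₀ ℕ) → MvPolynomial (Fin N) ℂ) (α : Fin N →₀ ℕ) :
    mkOp f (monomial α 1) = f α := by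
  have := (MvPolynomial.basisMonomials (Fin N) ℂ).constr_basis ℂ f α
  rwa [MvPolynomial.coe_basisMonomials] at this

lemma mu_monomial {N : ℕ} (j : Fin N) (α : Fin N →₀ ℕ) :
    mu j (monomial α 1) = monomial (α + Finsupp.single j 1) 1 := mkOp_monomial _ _

lemma gam_monomial {N : ℕ} (q : ℂ) (j : Fin N) (e : ℤ) (α : Fin N →₀ ℕ) :
    gam q j e (monomial α 1) = q ^ (e * (α j : ℤ)) • monomial α 1 := mkOp_monomial _ _

lemma del_monomial {N : ℕ} (p : ℂ) (j : Fin N) (α : Fin N →₀ ℕ) :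
    del p j (monomial α 1) = qint p (α j) • monomial (α - Finsupp.single j 1) 1 :=
  mkOp_monomial _ _

abbrev e0 : Fin 3 →₀ ℕ := Finsupp.single 0 1
abbrev e1 : Fin 3 →₀ ℕ := Finsupp.single 1 1
abbrev e2 : Fin 3 →₀ ℕ := Finsupp.single 2 1

/-- The scalar appearing in the first term of `Eop` on a monomial. -/
def scE (q : ℂ) (α : Fin 3 →₀ ℕ) : ℂ :=
  qint q 2 * (q ^ 2 * qint q ((α 2 : ℕ) : ℤ) * q ^ ((1:ℤ) * (((α - e2 + e0) 2 : ℕ) : ℤ)) *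
    q ^ (2 * (((α - e2 + e0) 1 : ℕ) : ℤ)))

lemma Eop_monomial (q : ℂ) (α : Fin 3 →₀ ℕ) :
    Eop q (monomial α 1) =
      scE q α • monomial (α - e2 + e0) 1 + qint q 2 • monomial (α + e1 + e2) 1 := by
  rw [Eop, LinearMap.smul_apply, LinearMap.add_apply, LinearMap.smul_apply,
    Module.End.mul_apply, Module.End.mul_apply, Module.End.mul_apply, Module.End.mul_apply,
    del_monomial, map_smul, mu_monomial, map_smul, gam_monomial, map_smul, map_smul,
    gam_monomial, mu_monomial, mu_monomial, smul_smul, smul_smul, smul_smul,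
    smul_add, smul_smul, add_right_comm α e2 e1, scE]

lemma qint_zero (q : ℂ) : qint q 0 = 0 := by simp [qint]

lemma qint_two_ne_zero (q : ℂ) (hq : q ≠ 0) (hroot : ∀ n : ℕ, 0 < n → q ^ n ≠ 1) :
    qint q 2 ≠ 0 := by
  have hden : q - q⁻¹ ≠ 0 := by
    intro h
    have : q * q = 1 := by
      field_simp at h
      linear_combination h
    exact hroot 2 (by norm_num) (by rw [pow_two]; exact this)
  have hnum : q ^ (2:ℤ) - q ^ (-2:ℤ) ≠ 0 := by
    intro h
    have h2 : q ^ (2:ℤ) = q ^ (-2:ℤ) := by linear_combination h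
    have h4 : q ^ (4:ℤ) = 1 := by
      have := congrArg (· * q ^ (2:ℤ)) h2
      simp only [← zpow_add₀ hq] at this
      norm_num at this
      exact this
    have : q ^ (4:ℕ) = 1 := by rw [← zpow_natCast]; exact_mod_cast h4
    exact hroot 4 (by norm_num) this
  exact div_ne_zero hnum hden

theorem stmt_12 (q : ℂ) (hq : q ≠ 0) (hroot : ∀ n : ℕ, 0 < n → q ^ n ≠ 1) (d : ℕ) :
    ∀ p ∈ PSd d, Eop q p = 0 → p = 0 := by
  intro p _ hE
  by_contra hp
  obtain ⟨α, hα, hmin⟩ := p.support.exists_min_image (fun β => β 0)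
    (MvPolynomial.support_nonempty.mpr hp)
  set B : Fin 3 →₀ ℕ := α + e1 + e2 with hB
  have hEsum : Eop q p = ∑ v ∈ p.support, coeff v p • Eop q (monomial v 1) := by
    conv_lhs => rw [as_sum p]
    rw [map_sum]
    refine Finset.sum_congr rfl fun v _ => ?_
    rw [← map_smul, smul_monomial, smul_eq_mul, mul_one]
  have hcoeff : coeff B (Eop q p) = qint q 2 * coeff α p := by
    rw [hEsum, coeff_sum]
    rw [Finset.sum_eq_single α]
    · have hne : α - e2 + e0 ≠ B := by
        intro h
        have := DFunLike.congr_fun h (1 : Fin 3)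
        simp [hB, Finsupp.add_apply, Finsupp.tsub_apply, Finsupp.single_apply] at this
      rw [coeff_smul, Eop_monomial, coeff_add, coeff_smul, coeff_smul,
        coeff_monomial, coeff_monomial, if_neg hne, if_pos rfl]
      simp [mul_comm]
    · intro v hv hvne
      have hne2 : v + e1 + e2 ≠ B := by
        intro h
        exact hvne (by
          have := add_right_cancel (add_right_cancel h)
          exact this)
      have hne1 : v - e2 + e0 ≠ B := by
        intro h
        have h2 := DFunLike.congr_fun h (2 : Fin 3)
        have h0 := DFunLike.congr_fun h (0 : Fin 3)
        simp [hB, Finsupp.add_apply, Finsupp.tsub_apply, Finsupp.single_apply] at h2 h0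
        -- h2 : v 2 - 1 = α 2 + 1, h0 : v 0 + 1 = α 0
        have hle := hmin v hv
        omega
      rw [coeff_smul, Eop_monomial, coeff_add, coeff_smul, coeff_smul,
        coeff_monomial, coeff_monomial, if_neg hne1, if_neg hne2]
      simp
    · intro h
      exact absurd hα h
  rw [hE, coeff_zero] at hcoeff
  have := (mul_eq_zero.mp hcoeff.symm).resolve_left (qint_two_ne_zero q hq hroot)
  exact absurd ((mem_support_iff.mp hα)) (not_not.mpr this)
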